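/- Let d ≥ 2 and 0 < δ < 1. There exists C > 0 such that for every integer N ≥ 2 and every integer j with −δN ≤ j ≤ 0: 2^{−j} 2^{(d+2)j} ‖ ∫_{ℝ^d} φ_0(2^j(x − y)) (φ_0(2^j(y − 2^{|j|+2N} e_1)))² cos(2^{N+1} y_1) dy ‖_{L^d(A_j)} ≤ C 2^{j−N}, where A_j := {x ∈ ℝ^d : |x − 2^{|j|+2N} e_1| ≤ 2^{−j}}. -/

import Mathlib

noncomputable section

open MeasureTheory Real Filter
open scoped FourierTransform ENNReal BigOperators

abbrev Eu (d : ℕ) : Type := EuclideanSpace ℝ (Fin d)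

namespace Paper

/-- The first standard basis vector of `ℝ^d`. -/
def e1 (d : ℕ) : Eu d := (WithLp.equiv 2 (Fin d → ℝ)).symm fun i => if (i : ℕ) = 0 then 1 else 0

/-- The first coordinate of a point of `ℝ^d`. -/
def x1 {d : ℕ} (x : Eu d) : ℝ := (inner ℝ x (e1 d) : ℝ)

/-- Convolution of two complex valued functions on `ℝ^d`. -/
def conv {d : ℕ} (f g : Eu d → ℂ) : Eu d → ℂ := fun x => ∫ y, f y * g (x - y)

/-- Partial derivative in the `i`-th coordinate direction. -/
def pd {d : ℕ} (i : Fin d) (f : Eu d → ℂ) : Eu d → ℂ :=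
  fun x => fderiv ℝ f x (EuclideanSpace.single i 1)

/-- Real-valued version of `pd`. -/
def pdR {d : ℕ} (i : Fin d) (f : Eu d → ℝ) : Eu d → ℝ :=
  fun x => fderiv ℝ f x (EuclideanSpace.single i 1)

/-- Littlewood-Paley dilation `φ_j (x) = 2^{dj} φ_0 (2^j x)`. -/
def LP {d : ℕ} (φ0 : Eu d → ℂ) (j : ℤ) : Eu d → ℂ :=
  fun x => (((2 : ℝ) ^ ((d : ℤ) * j) : ℝ) : ℂ) * φ0 (((2 : ℝ) ^ j) • x)

/-- The homogeneous Besov norm `‖f‖_{Ḃ^s_{p,1}}` (third index `q = 1`). -/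
def besov {d : ℕ} (φ0 : Eu d → ℂ) (s : ℝ) (p : ℝ≥0∞) (f : Eu d → ℂ) : ℝ≥0∞ :=
  ∑' j : ℤ, ENNReal.ofReal ((2 : ℝ) ^ (s * (j : ℝ))) * eLpNorm (conv (LP φ0 j) f) p volume

/-- Besov norm of a real-valued function. -/
def besovR {d : ℕ} (φ0 : Eu d → ℂ) (s : ℝ) (p : ℝ≥0∞) (f : Eu d → ℝ) : ℝ≥0∞ :=
  besov φ0 s p (fun x => (f x : ℂ))

/-- The set of integers `j` with `-δN ≤ j ≤ 0`. -/
def jSet (δ : ℝ) (N : ℕ) : Finset ℤ := Finset.Icc ⌈-(δ * (N : ℝ))⌉ 0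

/-- The translation `2^{|j|+2N} e_1`. -/
def shift (d : ℕ) (N : ℕ) (j : ℤ) : Eu d := ((2 : ℝ) ^ (j.natAbs + 2 * N) : ℝ) • e1 d

/-- `R = (log N)⁻¹`. -/
def RN (N : ℕ) : ℝ := (Real.log N)⁻¹

/-- First component of the initial datum `u_{0,N}` (in dimension `d`). -/
def u0c (d : ℕ) (φ0 : Eu d → ℂ) (δ : ℝ) (N : ℕ) : Eu d → ℂ := fun x =>
  ((RN N * (N : ℝ) ^ (-(1 : ℝ) / (d : ℝ)) * Real.sin ((2 : ℝ) ^ N * x1 x) : ℝ) : ℂ) *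
    ∑ j ∈ jSet δ N, (((2 : ℝ) ^ (-((d : ℤ) - 1) * j) : ℝ) : ℂ) * LP φ0 j (x - shift d N j)

/-- The initial velocity field `u_{0,N}`. -/
def u0v (d : ℕ) (φ0 : Eu d → ℂ) (δ : ℝ) (N : ℕ) : Fin d → Eu d → ℂ :=
  fun l x => if (l : ℕ) = 0 then u0c d φ0 δ N x else 0

/-- Heat semigroup `e^{tΔ}` given by convolution with the Gaussian kernel. -/
def heat {d : ℕ} (t : ℝ) (f : Eu d → ℂ) : Eu d → ℂ :=
  if t = 0 then f else fun x =>
    ∫ y, (((4 * Real.pi * t) ^ (-(d : ℝ) / 2) * Real.exp (-‖x - y‖ ^ 2 / (4 * t)) : ℝ) : ℂ) * f y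

/-- Divergence of a vector field. -/
def divg {d : ℕ} (u : Fin d → Eu d → ℂ) : Eu d → ℂ := fun x => ∑ j, pd j (u j) x

/-- Real divergence. -/
def divgR {d : ℕ} (u : Fin d → Eu d → ℝ) : Eu d → ℝ := fun x => ∑ j, pdR j (u j) x

/-- The lattice point `k ∈ ℤ³` seen inside `ℝ³`. -/
def kv (k : Fin 3 → ℤ) : Eu 3 := (WithLp.equiv 2 (Fin 3 → ℝ)).symm fun i => (k i : ℝ)

/-- The modulation space norm `‖f‖_{M_{3,1}}`. -/
def modNorm (χ : Eu 3 → ℂ) (f : Eu 3 → ℂ) : ℝ≥0∞ :=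
  ∑' k : Fin 3 → ℤ, eLpNorm (𝓕⁻ fun ξ => χ (ξ - kv k) * 𝓕 f ξ) 3 volume

/-- Modulation norm of a vector field: sum over the components. -/
def modNormV (χ : Eu 3 → ℂ) (u : Fin 3 → Eu 3 → ℂ) : ℝ≥0∞ := ∑ i, modNorm χ (u i)

/-- The hypotheses on the window function `χ` defining the modulation norm. -/
structure IsChi (χ : Eu 3 → ℂ) : Prop where
  smooth : ContDiff ℝ (⊤ : ℕ∞) χ
  compact : HasCompactSupport χ
  supp : Function.support χ ⊆ {ξ : Eu 3 | ∀ i : Fin 3, 0 ≤ ξ i ∧ ξ i < 2}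
  sum : ∀ ξ : Eu 3, HasSum (fun k : Fin 3 → ℤ => χ (ξ - kv k)) 1

/-- The semigroup `e^{t𝓛}`, `𝓛 = μΔ + (μ+λ)∇div`, defined on the Fourier side. -/
def Lsemi (μ lam t : ℝ) (u : Fin 3 → Eu 3 → ℂ) : Fin 3 → Eu 3 → ℂ := fun i =>
  𝓕⁻ fun ξ =>
    ((Real.exp (-(t * μ * ‖ξ‖ ^ 2)) : ℝ) : ℂ) *
        (𝓕 (u i) ξ - ((‖ξ‖ ^ 2 : ℝ) : ℂ)⁻¹ * ((ξ i : ℝ) : ℂ) * ∑ j, ((ξ j : ℝ) : ℂ) * 𝓕 (u j) ξ) +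
      ((Real.exp (-(t * (2 * μ + lam) * ‖ξ‖ ^ 2)) : ℝ) : ℂ) * ((‖ξ‖ ^ 2 : ℝ) : ℂ)⁻¹ *
        ((ξ i : ℝ) : ℂ) * ∑ j, ((ξ j : ℝ) : ℂ) * 𝓕 (u j) ξ

/-- The operator `𝓛 = μΔ + (μ+λ)∇div`. -/
def Lop (μ lam : ℝ) (u : Fin 3 → Eu 3 → ℂ) : Fin 3 → Eu 3 → ℂ := fun i x =>
  (μ : ℂ) * ∑ j, pd j (pd j (u i)) x + ((μ + lam : ℝ) : ℂ) * pd i (divg u) x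

/-- Real-valued version of `𝓛`. -/
def LopR (μ lam : ℝ) (u : Fin 3 → Eu 3 → ℝ) : Fin 3 → Eu 3 → ℝ := fun i x =>
  μ * ∑ j, pdR j (pdR j (u i)) x + (μ + lam) * pdR i (divgR u) x

/-- The heat semigroup `e^{tκΔ}` on the Fourier side. -/
def heatF (κ t : ℝ) (f : Eu 3 → ℂ) : Eu 3 → ℂ :=
  𝓕⁻ fun ξ => ((Real.exp (-(κ * t * ‖ξ‖ ^ 2)) : ℝ) : ℂ) * 𝓕 f ξ

/-- `(u·∇)v`. -/
def advect (u v : Fin 3 → Eu 3 → ℂ) : Fin 3 → Eu 3 → ℂ := fun i x => ∑ j, u j x * pd j (v i) x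

/-- Deformation tensor `D(u)_{ij}`. -/
def Dten (u : Fin 3 → Eu 3 → ℂ) (i j : Fin 3) : Eu 3 → ℂ := fun x =>
  (pd i (u j) x + pd j (u i) x) / 2

/-- The quadratic form `2μ tr(D(u)D(v)ᵀ) + λ div u · div v`. -/
def DD (μ lam : ℝ) (u v : Fin 3 → Eu 3 → ℂ) : Eu 3 → ℂ := fun x =>
  2 * (μ : ℂ) * ∑ i, ∑ j, Dten u i j x * Dten v i j x + (lam : ℂ) * divg u x * divg v x

end Paper
namespace Paper

/-- The first Picard iterate `U_1(t) = e^{t𝓛} u_0`. -/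
def U1 (μ lam : ℝ) (u0 : Fin 3 → Eu 3 → ℂ) (t : ℝ) : Fin 3 → Eu 3 → ℂ := Lsemi μ lam t u0

/-- The first Picard iterate `P_1(t) = -∫_0^t div U_1(s) ds`. -/
def P1 (μ lam : ℝ) (u0 : Fin 3 → Eu 3 → ℂ) (t : ℝ) : Eu 3 → ℂ := fun x =>
  -∫ s in (0 : ℝ)..t, divg (U1 μ lam u0 s) x

/-- The second Picard iterate `Θ_2`. -/
def Θ2 (μ lam κ : ℝ) (u0 : Fin 3 → Eu 3 → ℂ) (t : ℝ) : Eu 3 → ℂ := fun x =>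
  ∫ s in (0 : ℝ)..t, heatF κ (t - s) (DD μ lam (U1 μ lam u0 s) (U1 μ lam u0 s)) x

/-- The second Picard iterate `U_2`. -/
def U2 (μ lam κ : ℝ) (u0 : Fin 3 → Eu 3 → ℂ) (t : ℝ) : Fin 3 → Eu 3 → ℂ := fun i x =>
  ∫ s in (0 : ℝ)..t,
    Lsemi μ lam (t - s)
      (fun i' y =>
        -advect (U1 μ lam u0 s) (U1 μ lam u0 s) i' y - pd i' (Θ2 μ lam κ u0 s) y -
          P1 μ lam u0 s y * deriv (fun τ => U1 μ lam u0 τ i' y) s) i x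

/-- The second Picard iterate `P_2`. -/
def P2 (μ lam κ : ℝ) (u0 : Fin 3 → Eu 3 → ℂ) (t : ℝ) : Eu 3 → ℂ := fun x =>
  -∫ s in (0 : ℝ)..t,
    (divg (U2 μ lam κ u0 s) x + divg (fun j y => P1 μ lam u0 s y * U1 μ lam u0 s j y) x)

/-- The Picard expansion `(P_k, U_k, Θ_k)_{k ≥ 0}` associated with the data `(0, u_0, 0)`. -/
structure IsPicard (μ lam κ : ℝ) (u0 : Fin 3 → Eu 3 → ℂ) (P : ℕ → ℝ → Eu 3 → ℂ)
    (U : ℕ → ℝ → Fin 3 → Eu 3 → ℂ) (Θ : ℕ → ℝ → Eu 3 → ℂ) : Prop where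
  hP0 : ∀ t, P 0 t = 0
  hU0 : ∀ t, U 0 t = 0
  hΘ0 : ∀ t, Θ 0 t = 0
  hΘ1 : ∀ t, Θ 1 t = 0
  hU1 : ∀ t, U 1 t = U1 μ lam u0 t
  hP1 : ∀ t, P 1 t = P1 μ lam u0 t
  hΘ2 : ∀ t, Θ 2 t = Θ2 μ lam κ u0 t
  hU2 : ∀ t, U 2 t = U2 μ lam κ u0 t
  hP2 : ∀ t, P 2 t = P2 μ lam κ u0 t
  hPk : ∀ k, 3 ≤ k → ∀ t x, P k t x =
    -∫ s in (0 : ℝ)..t,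
      (divg (U k s) x +
        ∑ k1 ∈ Finset.Ioo 0 k, divg (fun j y => P k1 s y * U (k - k1) s j y) x)
  hUk : ∀ k, 3 ≤ k → ∀ t i x, U k t i x =
    ∫ s in (0 : ℝ)..t,
      Lsemi μ lam (t - s)
        (fun i' y =>
          -(∑ k1 ∈ Finset.Ioo 0 k, advect (U k1 s) (U (k - k1) s) i' y) -
            (∑ k1 ∈ Finset.Ioo 0 k, ∑ k2 ∈ Finset.Ioo 0 (k - k1),
              P (k - k1 - k2) s y * advect (U k1 s) (U k2 s) i' y) -
            pd i' (fun z => Θ k s z + ∑ k1 ∈ Finset.Ioo 0 k, P k1 s z * Θ (k - k1) s z) y -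
            ∑ k1 ∈ Finset.Ioo 0 k, P k1 s y * deriv (fun τ => U (k - k1) τ i' y) s) i x
  hΘk : ∀ k, 3 ≤ k → ∀ t x, Θ k t x =
    ∫ s in (0 : ℝ)..t,
      heatF κ (t - s)
        (fun y =>
          -(∑ k1 ∈ Finset.Ioo 0 k, ∑ j, U k1 s j y * pd j (Θ (k - k1) s) y) -
            (∑ k1 ∈ Finset.Ioo 0 k, ∑ k2 ∈ Finset.Ioo 0 (k - k1),
              P (k - k1 - k2) s y * ∑ j, U k1 s j y * pd j (Θ k2 s) y) -
            (∑ k1 ∈ Finset.Ioo 0 k, Θ k1 s y * divg (U (k - k1) s) y) -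
            (∑ k1 ∈ Finset.Ioo 0 k, ∑ k2 ∈ Finset.Ioo 0 (k - k1),
              P (k - k1 - k2) s y * Θ k1 s y * divg (U k2 s) y) -
            (∑ k1 ∈ Finset.Ioo 0 k, P k1 s y * deriv (fun τ => Θ (k - k1) τ y) s) +
            ∑ k1 ∈ Finset.Ioo 0 k, DD μ lam (U k1 s) (U (k - k1) s) y) x

end Paper

namespace Paper

section AuxLemmas

/-- Decay of a Schwartz function with the japanese-bracket weight. -/
lemma schwartz_decay_one_add {E F : Type*} [NormedAddCommGroup E] [NormedSpace ℝ E]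
    [NormedAddCommGroup F] [NormedSpace ℝ F] (f : SchwartzMap E F) (k : ℕ) :
    ∃ C : ℝ, 0 < C ∧ ∀ x, (1 + ‖x‖) ^ k * ‖f x‖ ≤ C := by
  obtain ⟨C0, hC0, h0⟩ := f.decay 0 0
  obtain ⟨C1, hC1, h1⟩ := f.decay k 0
  refine ⟨2 ^ k * (C0 + C1), by positivity, fun x => ?_⟩
  have h0' : ‖f x‖ ≤ C0 := by simpa [norm_iteratedFDeriv_zero] using h0 x
  have h1' : ‖x‖ ^ k * ‖f x‖ ≤ C1 := by
    simpa [norm_iteratedFDeriv_zero] using h1 x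
  have hn : (0:ℝ) ≤ ‖f x‖ := norm_nonneg _
  have h2k : (0:ℝ) < 2 ^ k := by positivity
  have hxk : (0:ℝ) ≤ ‖x‖ ^ k := by positivity
  have hb : (1 + ‖x‖) ^ k ≤ 2 ^ k * (1 + ‖x‖ ^ k) := by
    rcases le_total (‖x‖) 1 with hle | hle
    · calc (1 + ‖x‖) ^ k ≤ 2 ^ k := by
            apply pow_le_pow_left₀ (by positivity) (by linarith)
        _ ≤ 2 ^ k * (1 + ‖x‖ ^ k) := by nlinarith
    · calc (1 + ‖x‖) ^ k ≤ (2 * ‖x‖) ^ k := by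
            apply pow_le_pow_left₀ (by positivity) (by linarith)
        _ = 2 ^ k * ‖x‖ ^ k := mul_pow _ _ _
        _ ≤ 2 ^ k * (1 + ‖x‖ ^ k) := by nlinarith
  calc (1 + ‖x‖) ^ k * ‖f x‖ ≤ (2 ^ k * (1 + ‖x‖ ^ k)) * ‖f x‖ := by
        apply mul_le_mul_of_nonneg_right hb hn
    _ = 2 ^ k * (‖f x‖ + ‖x‖ ^ k * ‖f x‖) := by ring
    _ ≤ 2 ^ k * (C0 + C1) := by nlinarith

lemma inner_e1_e1 {d : ℕ} (hd : 0 < d) : (inner ℝ (e1 d) (e1 d) : ℝ) = 1 := by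
  classical
  rw [PiLp.inner_apply]
  have he : ∀ i : Fin d, e1 d i = if (i : ℕ) = 0 then (1:ℝ) else 0 := fun i => rfl
  simp only [he, RCLike.inner_apply, starRingEnd_apply, star_trivial]
  rw [Finset.sum_eq_single (⟨0, hd⟩ : Fin d)]
  · simp
  · intro b _ hb
    have : (b : ℕ) ≠ 0 := by
      intro h; apply hb; exact Fin.ext h
    simp [this]
  · intro h; exact absurd (Finset.mem_univ _) h

lemma norm_e1 {d : ℕ} (hd : 0 < d) : ‖e1 d‖ = 1 := by
  have h := real_inner_self_eq_norm_mul_norm (e1 d)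
  rw [inner_e1_e1 hd] at h
  nlinarith [norm_nonneg (e1 d)]

lemma x1_add_smul_e1 {d : ℕ} (hd : 0 < d) (y : Eu d) (t : ℝ) :
    x1 (y + t • e1 d) = x1 y + t := by
  unfold x1
  rw [inner_add_left, real_inner_smul_left, inner_e1_e1 hd, mul_one]

end AuxLemmas

set_option maxHeartbeats 2000000 in
/-- oscillation cancellation: the cosine term is bounded by
`C 2^{j-N}`. -/
theorem cosine_term_bound (d : ℕ) (hd : 2 ≤ d) (δ : ℝ) (hδ0 : 0 < δ) (hδ1 : δ < 1)
    (φ0 : SchwartzMap (Eu d) ℂ)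
    (hsupp : Function.support (𝓕 ⇑φ0) ⊆ {ξ : Eu d | 1 / 2 ≤ ‖ξ‖ ∧ ‖ξ‖ ≤ 2})
    (hsum : ∀ ξ : Eu d, ξ ≠ 0 → HasSum (fun j : ℤ => 𝓕 (LP (⇑φ0) j) ξ) 1) :
    ∃ C : ℝ, 0 < C ∧ ∀ N : ℕ, 2 ≤ N →
      ∀ j : ℤ, -(δ * (N : ℝ)) ≤ (j : ℝ) → j ≤ 0 →
        ENNReal.ofReal ((2 : ℝ) ^ (-j) * (2 : ℝ) ^ (((d : ℤ) + 2) * j)) *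
            eLpNorm
              (fun x : Eu d =>
                ∫ y : Eu d,
                  φ0 (((2 : ℝ) ^ j) • (x - y)) *
                    φ0 (((2 : ℝ) ^ j) • (y - shift d N j)) ^ 2 *
                      ((Real.cos ((2 : ℝ) ^ (N + 1) * x1 y) : ℝ) : ℂ))
              d (volume.restrict (Metric.closedBall (shift d N j) ((2 : ℝ) ^ (-j)))) ≤
          ENNReal.ofReal (C * (2 : ℝ) ^ (j - (N : ℤ))) := by
  classical
  have hd0 : 0 < d := by omega
  have hdR : (0:ℝ) < d := by exact_mod_cast hd0
  -- decay constants
  obtain ⟨C0, hC0pos, hC0⟩ := schwartz_decay_one_add φ0 (d + 1)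
  obtain ⟨C1, hC1pos, hC1'⟩ := schwartz_decay_one_add (SchwartzMap.fderivCLM ℝ (Eu d) ℂ φ0) (d + 1)
  have hC1 : ∀ z, (1 + ‖z‖) ^ (d+1) * ‖fderiv ℝ (⇑φ0) z‖ ≤ C1 := by
    intro z
    simpa [SchwartzMap.fderivCLM_apply] using hC1' z
  have hφ_bd : ∀ z : Eu d, ‖φ0 z‖ ≤ C0 := by
    intro z
    have h1 : (1:ℝ) ≤ (1 + ‖z‖) ^ (d+1) := one_le_pow₀ (by linarith [norm_nonneg z])
    calc ‖φ0 z‖ = 1 * ‖φ0 z‖ := (one_mul _).symm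
      _ ≤ (1 + ‖z‖) ^ (d+1) * ‖φ0 z‖ := mul_le_mul_of_nonneg_right h1 (norm_nonneg _)
      _ ≤ C0 := hC0 z
  have hφ'_bd : ∀ z : Eu d, ‖fderiv ℝ (⇑φ0) z‖ ≤ C1 := by
    intro z
    have h1 : (1:ℝ) ≤ (1 + ‖z‖) ^ (d+1) := one_le_pow₀ (by linarith [norm_nonneg z])
    calc ‖fderiv ℝ (⇑φ0) z‖ = 1 * ‖fderiv ℝ (⇑φ0) z‖ := (one_mul _).symm
      _ ≤ (1 + ‖z‖) ^ (d+1) * ‖fderiv ℝ (⇑φ0) z‖ := mul_le_mul_of_nonneg_right h1 (norm_nonneg _)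
      _ ≤ C1 := hC1 z
  have hφ_decay : ∀ z : Eu d, ‖φ0 z‖ ≤ C0 * (((1 + ‖z‖) ^ (d+1) : ℝ))⁻¹ := by
    intro z
    have hp : (0:ℝ) < (1 + ‖z‖) ^ (d+1) := by positivity
    calc ‖φ0 z‖ = ((1 + ‖z‖) ^ (d+1) * ‖φ0 z‖) * ((1 + ‖z‖) ^ (d+1))⁻¹ := by
          field_simp
      _ ≤ C0 * ((1 + ‖z‖) ^ (d+1))⁻¹ :=
          mul_le_mul_of_nonneg_right (hC0 z) (by positivity)
  have hφ'_decay : ∀ z : Eu d, ‖fderiv ℝ (⇑φ0) z‖ ≤ C1 * (((1 + ‖z‖) ^ (d+1) : ℝ))⁻¹ := by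
    intro z
    have hp : (0:ℝ) < (1 + ‖z‖) ^ (d+1) := by positivity
    calc ‖fderiv ℝ (⇑φ0) z‖
        = ((1 + ‖z‖) ^ (d+1) * ‖fderiv ℝ (⇑φ0) z‖) * ((1 + ‖z‖) ^ (d+1))⁻¹ := by
          field_simp
      _ ≤ C1 * ((1 + ‖z‖) ^ (d+1))⁻¹ :=
          mul_le_mul_of_nonneg_right (hC1 z) (by positivity)
  -- integrable weight
  have hgint : Integrable (fun z : Eu d => (((1 + ‖z‖) ^ (d+1) : ℝ))⁻¹) := by
    have hr : ((Module.finrank ℝ (Eu d) : ℝ)) < ((d:ℝ) + 1) := by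
      rw [finrank_euclideanSpace_fin]; norm_num
    have h := integrable_one_add_norm (E := Eu d) (μ := volume) (r := (d:ℝ)+1) hr
    refine h.congr (Filter.Eventually.of_forall fun z => ?_)
    have hcast : ((d:ℝ) + 1) = ((d+1 : ℕ) : ℝ) := by push_cast; ring
    show (1 + ‖z‖) ^ (-((d:ℝ) + 1)) = (((1 + ‖z‖) ^ (d+1) : ℝ))⁻¹
    rw [Real.rpow_neg (by positivity), hcast, Real.rpow_natCast]
  set I : ℝ := ∫ z : Eu d, (((1 + ‖z‖) ^ (d+1) : ℝ))⁻¹ with hI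
  have hInn : 0 ≤ I := integral_nonneg fun z => by positivity
  set K : ℝ := 3 * 2 ^ (d+1) * C0 ^ 2 * C1 with hK
  have hKpos : 0 < K := by positivity
  set K2 : ℝ := Real.pi / 4 * K * I with hK2
  have hK2nn : 0 ≤ K2 := by
    have := Real.pi_pos
    positivity
  set Vb : ℝ≥0∞ := volume (Metric.ball (0 : Eu d) 1) with hVb
  set Vt : ℝ := (Vb ^ ((d:ℝ)⁻¹)).toReal with hVt
  have hVtnn : 0 ≤ Vt := ENNReal.toReal_nonneg
  refine ⟨max 1 (K2 * Vt), lt_of_lt_of_le one_pos (le_max_left _ _), ?_⟩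
  intro N hN j hjlow hj0
  set c : ℝ := (2:ℝ) ^ j with hc
  have hcpos : 0 < c := zpow_pos (by norm_num) j
  have hcle1 : c ≤ 1 := zpow_le_one_of_nonpos₀ (by norm_num) hj0
  set ω : ℝ := (2:ℝ) ^ (N + 1) with hω
  have hωpos : 0 < ω := by rw [hω]; positivity
  set hh : ℝ := Real.pi / ω with hhh
  have hhpos : 0 < hh := div_pos Real.pi_pos hωpos
  have hhle1 : hh ≤ 1 := by
    rw [hhh, div_le_one hωpos]
    calc Real.pi ≤ 4 := Real.pi_le_four
      _ ≤ ω := by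
          rw [hω]
          calc (4:ℝ) = 2 ^ 2 := by norm_num
            _ ≤ 2 ^ (N+1) := by
                apply pow_le_pow_right₀ (by norm_num)
                omega
  have hωh : ω * hh = Real.pi := by
    rw [hhh]; field_simp
  set s : Eu d := shift d N j with hs
  set e : Eu d := e1 d with he
  have hnorme : ‖e‖ = 1 := norm_e1 hd0
  -- weight function
  set ψ : Eu d → ℝ := fun y => (((1 + ‖c • (y - s)‖) ^ (d+1) : ℝ))⁻¹ with hψ
  have hψnn : ∀ y, 0 ≤ ψ y := fun y => by positivity
  have hψint : Integrable ψ := by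
    have h1 : Integrable (fun z : Eu d => (((1 + ‖c • z‖) ^ (d+1) : ℝ))⁻¹) :=
      hgint.comp_smul (ne_of_gt hcpos)
    have h2 := h1.comp_sub_right s
    simpa using h2
  have hψval : (∫ y, ψ y) = (c ^ d)⁻¹ * I := by
    have ht1 : (∫ y, ψ y) = ∫ y : Eu d, (((1 + ‖c • y‖) ^ (d+1) : ℝ))⁻¹ :=
      integral_sub_right_eq_self (fun z : Eu d => (((1 + ‖c • z‖) ^ (d+1) : ℝ))⁻¹) s
    have ht2 : (∫ y : Eu d, (((1 + ‖c • y‖) ^ (d+1) : ℝ))⁻¹)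
        = |((c ^ Module.finrank ℝ (Eu d)))⁻¹| • ∫ z : Eu d, (((1 + ‖z‖) ^ (d+1) : ℝ))⁻¹ :=
      MeasureTheory.Measure.integral_comp_smul volume
        (fun z : Eu d => (((1 + ‖z‖) ^ (d+1) : ℝ))⁻¹) c
    rw [ht1, ht2, finrank_euclideanSpace_fin, abs_of_pos (by positivity), smul_eq_mul]
  -- weight comparison along short shifts in direction e
  have hwcomp : ∀ (y : Eu d) (t : ℝ), 0 ≤ t → t ≤ 1 →
      (((1 + ‖c • (y + (t * hh) • e - s)‖) ^ (d+1) : ℝ))⁻¹ ≤ 2 ^ (d+1) * ψ y := by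
    intro y t ht0 ht1
    set A : ℝ := 1 + ‖c • (y - s)‖ with hA
    set B : ℝ := 1 + ‖c • (y + (t * hh) • e - s)‖ with hB
    have hApos : (0:ℝ) < A := by positivity
    have hBpos : (0:ℝ) < B := by positivity
    have hdiffnorm : ‖c • (y - s) - c • (y + (t * hh) • e - s)‖ ≤ 1 := by
      have : c • (y - s) - c • (y + (t * hh) • e - s) = (-(c * (t * hh))) • e := by
        rw [← smul_sub]
        have : y - s - (y + (t * hh) • e - s) = -((t * hh) • e) := by abel
        rw [this, smul_neg, smul_smul, neg_smul]
      rw [this, norm_smul, hnorme, mul_one, norm_neg, Real.norm_eq_abs,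
        abs_of_nonneg (by positivity)]
      have hth : t * hh ≤ 1 := mul_le_one₀ ht1 (le_of_lt hhpos) hhle1
      have hthnn : 0 ≤ t * hh := by positivity
      nlinarith
    have hAB : A ≤ 2 * B := by
      have h1 : ‖c • (y - s)‖ ≤ ‖c • (y + (t * hh) • e - s)‖ + 1 := by
        calc ‖c • (y - s)‖
            ≤ ‖c • (y + (t * hh) • e - s)‖ + ‖c • (y - s) - c • (y + (t * hh) • e - s)‖ :=
              norm_le_insert' _ _
          _ ≤ ‖c • (y + (t * hh) • e - s)‖ + 1 := by linarith
      have h2 : (0:ℝ) ≤ ‖c • (y + (t * hh) • e - s)‖ := norm_nonneg _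
      rw [hA, hB]; linarith
    have hpow : A ^ (d+1) ≤ 2 ^ (d+1) * B ^ (d+1) := by
      calc A ^ (d+1) ≤ (2 * B) ^ (d+1) := pow_le_pow_left₀ (le_of_lt hApos) hAB _
        _ = 2 ^ (d+1) * B ^ (d+1) := mul_pow _ _ _
    have hApow : (0:ℝ) < A ^ (d+1) := by positivity
    have hBpow : (0:ℝ) < B ^ (d+1) := by positivity
    rw [hψ]
    have hfin : (1:ℝ) / B ^ (d+1) ≤ 2 ^ (d+1) / A ^ (d+1) := by
      rw [div_le_div_iff₀ hBpow hApow]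
      linarith
    calc (B ^ (d+1))⁻¹ = 1 / B ^ (d+1) := (one_div _).symm
      _ ≤ 2 ^ (d+1) / A ^ (d+1) := hfin
      _ = 2 ^ (d+1) * (A ^ (d+1))⁻¹ := div_eq_mul_inv _ _
  -- the pointwise bound
  set M : ℝ := K2 * (2:ℝ) ^ (j - (N:ℤ)) * (2:ℝ) ^ (-((d:ℤ) * j)) with hM
  have hMnn : 0 ≤ M := by
    rw [hM]
    have h1 : (0:ℝ) ≤ (2:ℝ) ^ (j - (N:ℤ)) := le_of_lt (zpow_pos (by norm_num) _)
    have h2 : (0:ℝ) ≤ (2:ℝ) ^ (-((d:ℤ) * j)) := le_of_lt (zpow_pos (by norm_num) _)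
    exact mul_nonneg (mul_nonneg hK2nn h1) h2
  have hFb : ∀ x : Eu d,
      ‖∫ y : Eu d, φ0 (c • (x - y)) * φ0 (c • (y - s)) ^ 2 *
        ((Real.cos (ω * x1 y) : ℝ) : ℂ)‖ ≤ M := by
    intro x
    simp only [pow_two]
    set u : Eu d → ℂ := fun z => φ0 (c • (x - z)) with hu
    set w : Eu d → ℂ := fun z => φ0 (c • (z - s)) with hwdef
    set G : Eu d → ℂ := fun z => u z * (w z * w z) with hG
    set cosy : Eu d → ℂ := fun y => ((Real.cos (ω * x1 y) : ℝ) : ℂ) with hcosy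
    show ‖∫ y : Eu d, G y * cosy y‖ ≤ M
    -- derivatives
    set Du : Eu d → (Eu d →L[ℝ] ℂ) := fun z =>
      (fderiv ℝ (⇑φ0) (c • (x - z))).comp (c • -(ContinuousLinearMap.id ℝ (Eu d))) with hDu
    set Dw : Eu d → (Eu d →L[ℝ] ℂ) := fun z =>
      (fderiv ℝ (⇑φ0) (c • (z - s))).comp (c • ContinuousLinearMap.id ℝ (Eu d)) with hDw
    have hu' : ∀ z, HasFDerivAt u (Du z) z := by
      intro z
      have h2 : HasFDerivAt (fun z : Eu d => x - z) (-(ContinuousLinearMap.id ℝ (Eu d))) z :=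
        (hasFDerivAt_id z).const_sub x
      have h3 := h2.const_smul c
      exact ((φ0.differentiable (c • (x - z))).hasFDerivAt).comp z h3
    have hw' : ∀ z, HasFDerivAt w (Dw z) z := by
      intro z
      have h1 : HasFDerivAt (fun z : Eu d => c • (z - s))
          (c • ContinuousLinearMap.id ℝ (Eu d)) z :=
        ((hasFDerivAt_id z).sub_const s).const_smul c
      exact ((φ0.differentiable (c • (z - s))).hasFDerivAt).comp z h1
    set DG : Eu d → (Eu d →L[ℝ] ℂ) := fun z =>
      u z • (w z • Dw z + w z • Dw z) + (w z * w z) • Du z with hDG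
    have hG' : ∀ z, HasFDerivAt G (DG z) z := fun z => (hu' z).mul ((hw' z).mul (hw' z))
    -- norm bounds on the pieces
    have hidle : ‖ContinuousLinearMap.id ℝ (Eu d)‖ ≤ 1 := ContinuousLinearMap.norm_id_le
    have hidnorm : ∀ a : ℝ, ‖a • ContinuousLinearMap.id ℝ (Eu d)‖ ≤ |a| := by
      intro a
      have h1 : ‖a • ContinuousLinearMap.id ℝ (Eu d)‖
          = ‖a‖ * ‖ContinuousLinearMap.id ℝ (Eu d)‖ :=
        norm_smul a (ContinuousLinearMap.id ℝ (Eu d))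
      rw [h1, Real.norm_eq_abs]
      calc |a| * ‖ContinuousLinearMap.id ℝ (Eu d)‖ ≤ |a| * 1 :=
            mul_le_mul_of_nonneg_left hidle (abs_nonneg a)
        _ = |a| := mul_one _
    have hidnorm' : ‖c • -(ContinuousLinearMap.id ℝ (Eu d))‖ ≤ c := by
      have h1 : ‖c • -(ContinuousLinearMap.id ℝ (Eu d))‖
          = ‖c‖ * ‖-(ContinuousLinearMap.id ℝ (Eu d))‖ :=
        norm_smul c (-(ContinuousLinearMap.id ℝ (Eu d)))
      rw [h1, norm_neg, Real.norm_eq_abs, abs_of_pos hcpos]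
      calc c * ‖ContinuousLinearMap.id ℝ (Eu d)‖ ≤ c * 1 :=
            mul_le_mul_of_nonneg_left hidle (le_of_lt hcpos)
        _ = c := mul_one _
    have hDu_norm : ∀ z, ‖Du z‖ ≤ C1 * c := by
      intro z
      calc ‖Du z‖
          ≤ ‖fderiv ℝ (⇑φ0) (c • (x - z))‖ * ‖c • -(ContinuousLinearMap.id ℝ (Eu d))‖ :=
            ContinuousLinearMap.opNorm_comp_le _ _
        _ ≤ C1 * c := mul_le_mul (hφ'_bd _) hidnorm' (norm_nonneg _) (le_of_lt hC1pos)
    have hDw_norm : ∀ z, ‖Dw z‖ ≤ C1 * (((1 + ‖c • (z - s)‖) ^ (d+1) : ℝ))⁻¹ * c := by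
      intro z
      calc ‖Dw z‖ ≤ ‖fderiv ℝ (⇑φ0) (c • (z - s))‖ * ‖c • ContinuousLinearMap.id ℝ (Eu d)‖ :=
            ContinuousLinearMap.opNorm_comp_le _ _
        _ ≤ (C1 * (((1 + ‖c • (z - s)‖) ^ (d+1) : ℝ))⁻¹) * c := by
            have h1 := hidnorm c
            rw [abs_of_pos hcpos] at h1
            exact mul_le_mul (hφ'_decay _) h1 (norm_nonneg _) (by positivity)
        _ = C1 * (((1 + ‖c • (z - s)‖) ^ (d+1) : ℝ))⁻¹ * c := by ring
    have hw_bd : ∀ z, ‖w z‖ ≤ C0 := fun z => hφ_bd _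
    have hw_decay : ∀ z, ‖w z‖ ≤ C0 * (((1 + ‖c • (z - s)‖) ^ (d+1) : ℝ))⁻¹ := fun z =>
      hφ_decay _
    have hu_bd : ∀ z, ‖u z‖ ≤ C0 := fun z => hφ_bd _
    -- derivative bound on segments
    have hDG_norm : ∀ z, ‖DG z‖ ≤
        3 * C0 ^ 2 * C1 * c * (((1 + ‖c • (z - s)‖) ^ (d+1) : ℝ))⁻¹ := by
      intro z
      set gz : ℝ := (((1 + ‖c • (z - s)‖) ^ (d+1) : ℝ))⁻¹ with hgz
      have hgznn : 0 ≤ gz := by positivity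
      have e1 : ‖u z • (w z • Dw z + w z • Dw z)‖
          ≤ ‖u z‖ * ‖w z • Dw z + w z • Dw z‖ := ContinuousLinearMap.opNorm_smul_le _ _
      have e2 : ‖w z • Dw z‖ ≤ ‖w z‖ * ‖Dw z‖ := ContinuousLinearMap.opNorm_smul_le _ _
      have e3 : ‖(w z * w z) • Du z‖ ≤ ‖w z * w z‖ * ‖Du z‖ :=
        ContinuousLinearMap.opNorm_smul_le _ _
      have e4 : ‖w z * w z‖ = ‖w z‖ * ‖w z‖ := norm_mul _ _
      have hwDw : ‖w z‖ * ‖Dw z‖ ≤ C0 * (C1 * gz * c) :=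
        mul_le_mul (hw_bd z) (hDw_norm z) (norm_nonneg _) (le_of_lt hC0pos)
      have t1 : ‖u z • (w z • Dw z + w z • Dw z)‖ ≤ C0 * (2 * (C0 * (C1 * gz * c))) := by
        refine le_trans e1 ?_
        apply mul_le_mul (hu_bd z) _ (norm_nonneg _) (le_of_lt hC0pos)
        calc ‖w z • Dw z + w z • Dw z‖ ≤ ‖w z • Dw z‖ + ‖w z • Dw z‖ := norm_add_le _ _
          _ ≤ ‖w z‖ * ‖Dw z‖ + ‖w z‖ * ‖Dw z‖ := add_le_add e2 e2
          _ ≤ C0 * (C1 * gz * c) + C0 * (C1 * gz * c) := add_le_add hwDw hwDw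
          _ = 2 * (C0 * (C1 * gz * c)) := by ring
      have t2 : ‖(w z * w z) • Du z‖ ≤ (C0 * gz) * C0 * (C1 * c) := by
        refine le_trans e3 ?_
        rw [e4]
        apply mul_le_mul _ (hDu_norm z) (norm_nonneg _) (by positivity)
        exact mul_le_mul (hw_decay z) (hw_bd z) (norm_nonneg _) (by positivity)
      have t3 : ‖DG z‖ ≤ ‖u z • (w z • Dw z + w z • Dw z)‖ + ‖(w z * w z) • Du z‖ :=
        norm_add_le _ _
      nlinarith [t1, t2, t3]
    -- mean value estimate along the segment
    have hdiff_le : ∀ y : Eu d, ‖G (y + hh • e) - G y‖ ≤ (c * K * ψ y) * hh := by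
      intro y
      have hconv : Convex ℝ (segment ℝ y (y + hh • e)) := convex_segment y (y + hh • e)
      have hseg : ∀ z ∈ segment ℝ y (y + hh • e), ‖fderiv ℝ G z‖ ≤ c * K * ψ y := by
        intro z hz
        rw [segment_eq_image'] at hz
        obtain ⟨t, ⟨ht0, ht1⟩, hzeq⟩ := hz
        have hzrw : z = y + (t * hh) • e := by
          rw [← hzeq]
          show y + t • (y + hh • e - y) = y + (t * hh) • e
          rw [add_sub_cancel_left, smul_smul]
        rw [hzrw, (hG' _).fderiv]
        calc ‖DG (y + (t * hh) • e)‖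
            ≤ 3 * C0 ^ 2 * C1 * c * (((1 + ‖c • (y + (t * hh) • e - s)‖) ^ (d+1) : ℝ))⁻¹ :=
              hDG_norm _
          _ ≤ 3 * C0 ^ 2 * C1 * c * (2 ^ (d+1) * ψ y) := by
              apply mul_le_mul_of_nonneg_left (hwcomp y t ht0 ht1) (by positivity)
          _ = c * K * ψ y := by rw [hK]; ring
      have hmv := hconv.norm_image_sub_le_of_norm_fderiv_le
        (fun z _ => (hG' z).differentiableAt) hseg
        (left_mem_segment ℝ _ _) (right_mem_segment ℝ _ _)
      have hnorm : ‖y + hh • e - y‖ = hh := by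
        rw [add_sub_cancel_left, norm_smul, hnorme, mul_one, Real.norm_eq_abs,
          abs_of_pos hhpos]
      rw [hnorm] at hmv
      exact hmv
    -- continuity, integrability
    have hφc : Continuous (⇑φ0) := φ0.continuous
    have hGc : Continuous G := by
      apply Continuous.mul
      · exact hφc.comp ((continuous_const.sub continuous_id).const_smul c)
      · exact (hφc.comp ((continuous_id.sub continuous_const).const_smul c)).mul
          (hφc.comp ((continuous_id.sub continuous_const).const_smul c))
    have hx1c : Continuous fun y : Eu d => x1 y := by
      have : (fun y : Eu d => x1 y) = fun y : Eu d => (inner ℝ y (e1 d) : ℝ) := rfl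
      rw [this]
      exact continuous_id.inner continuous_const
    have hcosc : Continuous cosy := by
      rw [hcosy]
      exact Complex.continuous_ofReal.comp (Real.continuous_cos.comp (continuous_const.mul hx1c))
    have hcos1 : ∀ y, ‖cosy y‖ ≤ 1 := by
      intro y
      rw [hcosy]
      simp only [Complex.norm_real]
      exact Real.abs_cos_le_one _
    have hGbound : ∀ y, ‖G y * cosy y‖ ≤ C0 ^ 3 * ψ y := by
      intro y
      calc ‖G y * cosy y‖ = ‖u y‖ * (‖w y‖ * ‖w y‖) * ‖cosy y‖ := by
            rw [norm_mul, norm_mul, norm_mul]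
        _ ≤ C0 * (C0 * (C0 * ψ y)) * 1 := by
            apply mul_le_mul _ (hcos1 y) (norm_nonneg _) (by positivity)
            apply mul_le_mul (hu_bd y) _ (by positivity) (le_of_lt hC0pos)
            exact mul_le_mul (hw_bd y) (hw_decay y) (norm_nonneg _) (le_of_lt hC0pos)
        _ = C0 ^ 3 * ψ y := by ring
    have hGshiftbound : ∀ y, ‖G (y + hh • e) * cosy y‖ ≤ C0 ^ 3 * (2 ^ (d+1) * ψ y) := by
      intro y
      have hw2 : (((1 + ‖c • (y + hh • e - s)‖) ^ (d+1) : ℝ))⁻¹ ≤ 2 ^ (d+1) * ψ y := by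
        have := hwcomp y 1 (by norm_num) (le_refl 1)
        rwa [one_mul] at this
      calc ‖G (y + hh • e) * cosy y‖
          = ‖u (y + hh • e)‖ * (‖w (y + hh • e)‖ * ‖w (y + hh • e)‖) * ‖cosy y‖ := by
            rw [norm_mul, norm_mul, norm_mul]
        _ ≤ C0 * (C0 * (C0 * (2 ^ (d+1) * ψ y))) * 1 := by
            apply mul_le_mul _ (hcos1 y) (norm_nonneg _) (by positivity)
            apply mul_le_mul (hu_bd _) _ (by positivity) (le_of_lt hC0pos)
            apply mul_le_mul (hw_bd _) _ (norm_nonneg _) (le_of_lt hC0pos)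
            exact le_trans (hw_decay _) (mul_le_mul_of_nonneg_left hw2 (le_of_lt hC0pos))
        _ = C0 ^ 3 * (2 ^ (d+1) * ψ y) := by ring
    have hint1 : Integrable (fun y => G y * cosy y) := by
      apply Integrable.mono' (hψint.const_mul (C0 ^ 3))
      · exact (hGc.mul hcosc).aestronglyMeasurable
      · exact Filter.Eventually.of_forall hGbound
    have hint2 : Integrable (fun y => G (y + hh • e) * cosy y) := by
      apply Integrable.mono' ((hψint.const_mul (C0 ^ 3 * 2 ^ (d+1))))
      · exact ((hGc.comp (continuous_id.add continuous_const)).mul hcosc).aestronglyMeasurable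
      · refine Filter.Eventually.of_forall fun y => ?_
        calc ‖G (y + hh • e) * cosy y‖ ≤ C0 ^ 3 * (2 ^ (d+1) * ψ y) := hGshiftbound y
          _ = C0 ^ 3 * 2 ^ (d+1) * ψ y := by ring
    -- the translation/flip identity
    have hflip : (∫ y, G y * cosy y) = -∫ y, G (y + hh • e) * cosy y := by
      have ht := integral_add_right_eq_self (μ := volume)
        (fun y : Eu d => G y * ((Real.cos (ω * x1 y) : ℝ) : ℂ)) (hh • e)
      calc (∫ y, G y * cosy y)
          = ∫ y : Eu d, G (y + hh • e) * ((Real.cos (ω * x1 (y + hh • e)) : ℝ) : ℂ) := by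
            rw [hcosy]; exact ht.symm
        _ = -∫ y, G (y + hh • e) * cosy y := by
            rw [← integral_neg]
            congr 1
            funext y
            have hx1 : x1 (y + hh • e) = x1 y + hh := x1_add_smul_e1 hd0 y hh
            rw [hx1, mul_add, hωh, Real.cos_add_pi, hcosy]
            push_cast
            ring
    have hsub : (∫ y, (G y - G (y + hh • e)) * cosy y)
        = (∫ y, G y * cosy y) - ∫ y, G (y + hh • e) * cosy y := by
      rw [← integral_sub hint1 hint2]
      congr 1
      funext y
      ring
    have h2 : (∫ y, (G y - G (y + hh • e)) * cosy y) = 2 * ∫ y, G y * cosy y := by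
      rw [hsub, hflip]; ring
    have hb2 : ‖∫ y, (G y - G (y + hh • e)) * cosy y‖ ≤ (c * K * hh) * ((c ^ d)⁻¹ * I) := by
      have hb3 : ‖∫ y, (G y - G (y + hh • e)) * cosy y‖ ≤ ∫ y, (c * K * hh) * ψ y := by
        apply norm_integral_le_of_norm_le (hψint.const_mul (c * K * hh))
        refine Filter.Eventually.of_forall fun y => ?_
        calc ‖(G y - G (y + hh • e)) * cosy y‖ = ‖G y - G (y + hh • e)‖ * ‖cosy y‖ :=
              norm_mul _ _
          _ ≤ ((c * K * ψ y) * hh) * 1 := by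
              apply mul_le_mul _ (hcos1 y) (norm_nonneg _) (by positivity)
              rw [norm_sub_rev]
              exact hdiff_le y
          _ = (c * K * hh) * ψ y := by ring
      calc ‖∫ y, (G y - G (y + hh • e)) * cosy y‖ ≤ ∫ y, (c * K * hh) * ψ y := hb3
        _ = (c * K * hh) * ∫ y, ψ y := integral_const_mul _ _
        _ = (c * K * hh) * ((c ^ d)⁻¹ * I) := by rw [hψval]
    have hFle : ‖∫ y, G y * cosy y‖ ≤ ((c * K * hh) * ((c ^ d)⁻¹ * I)) / 2 := by
      have h4 : ‖(2 : ℂ) * ∫ y, G y * cosy y‖ = 2 * ‖∫ y, G y * cosy y‖ := by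
        rw [norm_mul]
        norm_num
      rw [h2, h4] at hb2
      linarith
    -- conclude by arithmetic
    have hcd : (c ^ d)⁻¹ = (2:ℝ) ^ (-((d:ℤ) * j)) := by
      rw [hc, ← zpow_natCast ((2:ℝ) ^ j) d, ← zpow_mul, ← zpow_neg]
      congr 1
      ring
    have harith : ((c * K * hh) * ((c ^ d)⁻¹ * I)) / 2 = M := by
      rw [hcd, hM, hK2, hhh, hω, hc]
      rw [zpow_sub₀ (by norm_num : (2:ℝ) ≠ 0), zpow_natCast]
      have h2N : (0:ℝ) < (2:ℝ) ^ N := by positivity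
      field_simp
      ring
    rw [← harith]
    exact hFle
  -- from the pointwise bound to the L^d bound
  set r : ℝ := (2:ℝ) ^ (-j) with hr
  have hrpos : 0 < r := zpow_pos (by norm_num) _
  have hdne : ((d : ℝ≥0∞)) ≠ 0 := by
    simp only [ne_eq, Nat.cast_eq_zero]
    omega
  have hsn := eLpNorm_le_of_ae_bound (μ := volume.restrict (Metric.closedBall s r))
    (p := (d : ℝ≥0∞))
    (f := fun x : Eu d => ∫ y : Eu d, φ0 (c • (x - y)) * φ0 (c • (y - s)) ^ 2 *
      ((Real.cos (ω * x1 y) : ℝ) : ℂ))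
    (Filter.Eventually.of_forall hFb)
  have htoReal : ((d : ℝ≥0∞)).toReal⁻¹ = ((d:ℝ))⁻¹ := by simp
  have hvol : (volume.restrict (Metric.closedBall s r)) Set.univ
      = ENNReal.ofReal (r ^ d) * Vb := by
    rw [Measure.restrict_apply_univ]
    rw [Measure.addHaar_closedBall volume s (le_of_lt hrpos), finrank_euclideanSpace_fin]
  have hVbne : Vb ^ ((d:ℝ)⁻¹) ≠ ⊤ :=
    (ENNReal.rpow_lt_top_of_nonneg (by positivity) measure_ball_lt_top.ne).ne
  have hpowvol : ((ENNReal.ofReal (r ^ d) * Vb)) ^ ((d:ℝ))⁻¹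
      = ENNReal.ofReal r * ENNReal.ofReal Vt := by
    rw [ENNReal.mul_rpow_of_nonneg _ _ (by positivity)]
    congr 1
    · rw [ENNReal.ofReal_rpow_of_pos (by positivity)]
      congr 1
      rw [← Real.rpow_natCast r d, ← Real.rpow_mul (le_of_lt hrpos),
        mul_inv_cancel₀ (by positivity : (d:ℝ) ≠ 0), Real.rpow_one]
    · rw [hVt, ENNReal.ofReal_toReal hVbne]
  have hsn2 : eLpNorm
      (fun x : Eu d => ∫ y : Eu d, φ0 (c • (x - y)) * φ0 (c • (y - s)) ^ 2 *
        ((Real.cos (ω * x1 y) : ℝ) : ℂ)) d (volume.restrict (Metric.closedBall s r))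
      ≤ ENNReal.ofReal r * ENNReal.ofReal Vt * ENNReal.ofReal M := by
    calc eLpNorm _ (d : ℝ≥0∞) (volume.restrict (Metric.closedBall s r))
        ≤ (volume.restrict (Metric.closedBall s r)) Set.univ ^ ((d : ℝ≥0∞)).toReal⁻¹ *
          ENNReal.ofReal M := hsn
      _ = ENNReal.ofReal r * ENNReal.ofReal Vt * ENNReal.ofReal M := by
          rw [hvol, htoReal, hpowvol]
  have hexp : (-j) + ((((d:ℤ)+2) * j) + ((-j) + ((j - (N:ℤ)) + (-((d:ℤ) * j)))))
      = j - (N:ℤ) := by ring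
  have hreal : ((2:ℝ) ^ (-j) * (2:ℝ) ^ (((d:ℤ)+2) * j)) * (r * (Vt * M))
      ≤ max 1 (K2 * Vt) * (2:ℝ) ^ (j - (N:ℤ)) := by
    have h2ne : (2:ℝ) ≠ 0 := by norm_num
    have hstep : ((2:ℝ) ^ (-j) * (2:ℝ) ^ (((d:ℤ)+2) * j)) * (r * (Vt * M))
        = (K2 * Vt) * (2:ℝ) ^ ((-j) + ((((d:ℤ)+2) * j) + ((-j) + ((j - (N:ℤ)) + (-((d:ℤ) * j)))))) := by
      rw [zpow_add₀ h2ne, zpow_add₀ h2ne, zpow_add₀ h2ne, zpow_add₀ h2ne, hr, hM]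
      ring
    rw [hstep, hexp]
    apply mul_le_mul_of_nonneg_right (le_max_right _ _) (by positivity)
  calc ENNReal.ofReal ((2:ℝ) ^ (-j) * (2:ℝ) ^ (((d:ℤ)+2) * j)) *
        eLpNorm (fun x : Eu d => ∫ y : Eu d, φ0 (c • (x - y)) * φ0 (c • (y - s)) ^ 2 *
          ((Real.cos (ω * x1 y) : ℝ) : ℂ)) d (volume.restrict (Metric.closedBall s r))
      ≤ ENNReal.ofReal ((2:ℝ) ^ (-j) * (2:ℝ) ^ (((d:ℤ)+2) * j)) *
        (ENNReal.ofReal r * ENNReal.ofReal Vt * ENNReal.ofReal M) := by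
        exact mul_le_mul_right hsn2 _
    _ = ENNReal.ofReal (((2:ℝ) ^ (-j) * (2:ℝ) ^ (((d:ℤ)+2) * j)) * (r * (Vt * M))) := by
        rw [← ENNReal.ofReal_mul (by positivity : (0:ℝ) ≤ r),
          ← ENNReal.ofReal_mul (by positivity : (0:ℝ) ≤ r * Vt),
          ← ENNReal.ofReal_mul (by positivity : (0:ℝ) ≤ (2:ℝ) ^ (-j) * (2:ℝ) ^ (((d:ℤ)+2) * j))]
        congr 1
        ring
    _ ≤ ENNReal.ofReal (max 1 (K2 * Vt) * (2:ℝ) ^ (j - (N:ℤ))) :=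
        ENNReal.ofReal_le_ofReal hreal

end Paper
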